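/- GP(n,k) admits a perfect code if and only if n ≡ 0 (mod 4) and k ≡ 1 (mod 2). -/

import Mathlib

/-!
A perfect code `C` meets every closed neighbourhood exactly once. With `a`, `b` the indicators of
its outer and inner parts this reads `a i + a (i + 1) + a (i - 1) + b i = 1` and
`b i + b (i + k) + b (i - k) + a i = 1`, and summing over `ZMod n` gives
`3|a| + |b| = n = 3|b| + |a|`, so `n = 4|a|`. Call `i` occupied when `a i + b i = 1`. Along the
cycle, occupied pairs `i, i + 1` minus vacant pairs number `2·#occupied - n = 0`; but an occupied
pair lies in the inner layer and leaves the two distinct pairs `i ± k` vacant, so there are no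
such pairs at all and occupancy alternates. Since `v_i ∈ C` leaves `i + k` vacant, `k` is odd.
If `2k = 0` the inner equation loses a term and the same count forces `n = 0`. Conversely, the
`u_i` with `i ≡ 0` and the `v_i` with `i ≡ 2 (mod 4)` form a perfect code when `k` is odd.
-/

/-- The generalized Petersen graph GP(n,k): vertices are `Sum.inl i` (outer, u_i)
and `Sum.inr i` (inner, v_i) for `i : ZMod n`. -/
def GP (n k : ℕ) : SimpleGraph (ZMod n ⊕ ZMod n) where
  Adj x y :=
    match x, y with
    | .inl i, .inl j => i ≠ j ∧ (j = i + 1 ∨ i = j + 1)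
    | .inl i, .inr j => i = j
    | .inr i, .inl j => i = j
    | .inr i, .inr j => i ≠ j ∧ (j = i + (k : ZMod n) ∨ i = j + (k : ZMod n))
  symm := ⟨by rintro (i|i) (j|j) h <;> simp_all <;> tauto⟩
  loopless := ⟨by rintro (i|i) h <;> simp_all⟩

/-- A perfect code: an independent set such that every vertex not in `C`
has exactly one neighbor in `C`. -/
def IsPerfectCode {V : Type*} (G : SimpleGraph V) (C : Set V) : Prop :=
  (∀ x ∈ C, ∀ y ∈ C, ¬ G.Adj x y) ∧ ∀ x ∉ C, ∃! y, y ∈ C ∧ G.Adj x y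

/-- A total perfect code: every vertex has exactly one neighbor in `C`. -/
def IsTotalPerfectCode {V : Type*} (G : SimpleGraph V) (C : Set V) : Prop :=
  ∀ x, ∃! y, y ∈ C ∧ G.Adj x y

open Finset

section PerfectCode

variable {V : Type*} {G : SimpleGraph V} {C : Set V}

theorem isPerfectCode_iff_existsUnique :
    IsPerfectCode G C ↔ ∀ x, ∃! y, y ∈ C ∧ (y = x ∨ G.Adj x y) := by
  constructor
  · rintro ⟨hind, hdom⟩ x
    by_cases hx : x ∈ C
    · refine ⟨x, ⟨hx, Or.inl rfl⟩, ?_⟩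
      rintro y ⟨hy, rfl | hxy⟩
      · rfl
      · exact absurd hxy (hind x hx y hy)
    · obtain ⟨y, ⟨hy, hxy⟩, huniq⟩ := hdom x hx
      refine ⟨y, ⟨hy, Or.inr hxy⟩, ?_⟩
      rintro z ⟨hz, rfl | hxz⟩
      · exact absurd hz hx
      · exact huniq z ⟨hz, hxz⟩
  · intro h
    refine ⟨fun x hx y hy hxy => ?_, fun x hx => ?_⟩
    · obtain ⟨z, -, hz⟩ := h x
      exact G.ne_of_adj hxy ((hz x ⟨hx, Or.inl rfl⟩).trans (hz y ⟨hy, Or.inr hxy⟩).symm)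
    · obtain ⟨y, ⟨hy, rfl | hxy⟩, huniq⟩ := h x
      · exact absurd hy hx
      · exact ⟨y, ⟨hy, hxy⟩, fun z hz => huniq z ⟨hz.1, Or.inr hz.2⟩⟩

theorem Finset.sum_indicator_one_eq_one_iff {s : Finset V} :
    ∑ y ∈ s, C.indicator (1 : V → ℕ) y = 1 ↔ ∃! y, y ∈ C ∧ y ∈ s := by
  classical
  rw [sum_indicator_eq_sum_filter]
  simp only [Pi.one_apply, sum_const, smul_eq_mul, mul_one, card_eq_one,
    eq_singleton_iff_unique_mem, mem_filter]
  constructor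
  · rintro ⟨y, ⟨hys, hyC⟩, huniq⟩
    exact ⟨y, ⟨hyC, hys⟩, fun z hz => huniq z ⟨hz.2, hz.1⟩⟩
  · rintro ⟨y, ⟨hyC, hys⟩, huniq⟩
    exact ⟨y, ⟨hys, hyC⟩, fun z hz => huniq z ⟨hz.2, hz.1⟩⟩

theorem isPerfectCode_iff_sum_indicator (N : V → Finset V)
    (hN : ∀ x y, y ∈ N x ↔ y = x ∨ G.Adj x y) :
    IsPerfectCode G C ↔ ∀ x, ∑ y ∈ N x, C.indicator (1 : V → ℕ) y = 1 := by
  simp only [isPerfectCode_iff_existsUnique, Finset.sum_indicator_one_eq_one_iff, hN]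

end PerfectCode

section Domination

variable {G : Type*} [AddCommGroup G]

theorem Fintype.sum_comp_add_right [Fintype G] {M : Type*} [AddCommMonoid M] (f : G → M)
    (s : G) : ∑ i, f (i + s) = ∑ i, f i :=
  Fintype.sum_equiv (Equiv.addRight s) _ _ fun _ => rfl

theorem Fintype.sum_comp_sub_right [Fintype G] {M : Type*} [AddCommMonoid M] (f : G → M)
    (s : G) : ∑ i, f (i - s) = ∑ i, f i :=
  Fintype.sum_equiv (Equiv.subRight s) _ _ fun _ => rfl

theorem card_pairs_eq_one_add_card [Fintype G] {d : G → ℕ} (hd : ∀ x, d x ≤ 1) (s : G) :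
    #{x | d x = 1 ∧ d (x + s) = 1} + Fintype.card G =
      #{x | d x = 0 ∧ d (x + s) = 0} + 2 * ∑ x, d x := by
  have key : ∀ x, ((if d x = 1 ∧ d (x + s) = 1 then 1 else 0) + 1 : ℕ) =
      (if d x = 0 ∧ d (x + s) = 0 then 1 else 0) + (d x + d (x + s)) := by
    intro x
    have := hd x
    have := hd (x + s)
    split_ifs <;> omega
  calc #{x | d x = 1 ∧ d (x + s) = 1} + Fintype.card G
      = ∑ x, ((if d x = 1 ∧ d (x + s) = 1 then 1 else 0) + 1) := by
        rw [card_filter, Fintype.card_eq_sum_ones, sum_add_distrib]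
    _ = ∑ x, ((if d x = 0 ∧ d (x + s) = 0 then 1 else 0) + (d x + d (x + s))) :=
        Fintype.sum_congr _ _ key
    _ = #{x | d x = 0 ∧ d (x + s) = 0} + 2 * ∑ x, d x := by
        rw [sum_add_distrib, sum_add_distrib, Fintype.sum_comp_add_right, card_filter, two_mul]

/-- `a` and `b` are the `0/1` indicators of a perfect code on two layers indexed by `G`, seen
from the `a`-layer: the closed neighbourhood of `i` consists of `i, i + s, i - s` in its own
layer and of `i` in the other one. -/
def IsPerfectLayer (s : G) (a b : G → ℕ) : Prop :=
  ∀ i, a i + a (i + s) + a (i - s) + b i = 1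

namespace IsPerfectLayer

variable {a b : G → ℕ} {s t : G}

theorem add_le_one (h : IsPerfectLayer s a b) (x : G) : a x + b x ≤ 1 := by
  have := h x
  omega

theorem add_eq_zero_of_eq_one (h : IsPerfectLayer s a b) {x : G} (hx : a x = 1) :
    a (x + s) + b (x + s) = 0 ∧ a (x - s) + b (x - s) = 0 := by
  have h₁ := h (x + s)
  have h₂ := h (x - s)
  rw [add_sub_cancel_right] at h₁
  rw [sub_add_cancel] at h₂
  omega

theorem right_eq_one_of_pair (h : IsPerfectLayer s a b) {x : G}
    (h₀ : (a + b) x = 1) (h₁ : (a + b) (x + s) = 1) : b x = 1 ∧ b (x + s) = 1 := by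
  have := h x
  have := h (x + s)
  rw [add_sub_cancel_right] at this
  simp only [Pi.add_apply] at h₀ h₁
  omega

theorem vacant_of_pair (hout : IsPerfectLayer s a b) (hin : IsPerfectLayer t b a) {y : G}
    (h₀ : (a + b) y = 1) (h₁ : (a + b) (y + s) = 1) :
    b y = 1 ∧ ((a + b) (y + t) = 0 ∧ (a + b) (y + t + s) = 0) ∧
      ((a + b) (y - t) = 0 ∧ (a + b) (y - t + s) = 0) := by
  obtain ⟨hy, hys⟩ := hout.right_eq_one_of_pair h₀ h₁
  have := hin.add_eq_zero_of_eq_one hy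
  have := hin.add_eq_zero_of_eq_one hys
  rw [add_right_comm y t s, sub_add_eq_add_sub]
  simp only [Pi.add_apply]
  omega

variable [Fintype G]

theorem three_mul_sum_add_sum_eq_card (h : IsPerfectLayer s a b) :
    3 * ∑ i, a i + ∑ i, b i = Fintype.card G := by
  have := Fintype.sum_congr _ _ h
  simp only [sum_add_distrib, Fintype.sum_comp_add_right, Fintype.sum_comp_sub_right,
    sum_const, card_univ, smul_eq_mul, mul_one] at this
  omega

theorem sum_right_eq_sum_left (hout : IsPerfectLayer s a b) (hin : IsPerfectLayer t b a) :
    ∑ i, b i = ∑ i, a i := by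
  have := hout.three_mul_sum_add_sum_eq_card
  have := hin.three_mul_sum_add_sum_eq_card
  omega

theorem card_eq_four_mul_sum (hout : IsPerfectLayer s a b) (hin : IsPerfectLayer t b a) :
    Fintype.card G = 4 * ∑ i, a i := by
  have := hout.three_mul_sum_add_sum_eq_card
  have := hout.sum_right_eq_sum_left hin
  omega

/-- An occupied pair `y, y + s` lies in the `b`-layer and leaves the pairs `y ± t` vacant; the two
images are disjoint because `b` cannot be `1` at both `x - t` and `x + t`. -/
theorem two_mul_card_pairs_le (hout : IsPerfectLayer s a b) (hin : IsPerfectLayer t b a) :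
    2 * #{x | (a + b) x = 1 ∧ (a + b) (x + s) = 1} ≤
      #{x | (a + b) x = 0 ∧ (a + b) (x + s) = 0} := by
  classical
  set P : Finset G := {x | (a + b) x = 1 ∧ (a + b) (x + s) = 1}
  set Q : Finset G := {x | (a + b) x = 0 ∧ (a + b) (x + s) = 0}
  have hdisj : Disjoint (P.image (· + t)) (P.image (· - t)) := by
    rw [disjoint_left]
    intro _ hx hx'
    obtain ⟨y, hy, rfl⟩ := mem_image.1 hx
    obtain ⟨z, hz, hzy⟩ := mem_image.1 hx'
    rw [mem_filter] at hy hz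
    have := (hout.vacant_of_pair hin hy.2.1 hy.2.2).1
    have := (hout.vacant_of_pair hin hz.2.1 hz.2.2).1
    have := hin (y + t)
    rw [add_sub_cancel_right, ← eq_add_of_sub_eq hzy] at this
    omega
  have hsub : P.image (· + t) ∪ P.image (· - t) ⊆ Q := by
    intro _ hx
    rw [mem_union, mem_image, mem_image] at hx
    rcases hx with ⟨y, hy, rfl⟩ | ⟨y, hy, rfl⟩ <;> rw [mem_filter] at hy ⊢
    · exact ⟨mem_univ _, (hout.vacant_of_pair hin hy.2.1 hy.2.2).2.1⟩
    · exact ⟨mem_univ _, (hout.vacant_of_pair hin hy.2.1 hy.2.2).2.2⟩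
  calc 2 * #P = #(P.image (· + t) ∪ P.image (· - t)) := by
        rw [card_union_of_disjoint hdisj, card_image_of_injective _ (add_left_injective t),
          card_image_of_injective _ (sub_left_injective (b := t)), two_mul]
    _ ≤ _ := card_le_card hsub

theorem apply_add_apply_add_eq_one (hout : IsPerfectLayer s a b) (hin : IsPerfectLayer t b a)
    (x : G) : (a + b) x + (a + b) (x + s) = 1 := by
  have hcard := hout.card_eq_four_mul_sum hin
  have hsum := hout.sum_right_eq_sum_left hin
  have hpairs := card_pairs_eq_one_add_card (d := a + b) hout.add_le_one s
  have hle := hout.two_mul_card_pairs_le hin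
  have hsplit : ∑ x, (a + b) x = ∑ x, a x + ∑ x, b x := sum_add_distrib
  have hP : #{x | (a + b) x = 1 ∧ (a + b) (x + s) = 1} = 0 := by omega
  have hQ : #{x | (a + b) x = 0 ∧ (a + b) (x + s) = 0} = 0 := by omega
  rw [card_eq_zero, filter_eq_empty_iff] at hP hQ
  have := hP (mem_univ x)
  have := hQ (mem_univ x)
  have := hout.add_le_one x
  have := hout.add_le_one (x + s)
  simp only [Pi.add_apply] at *
  omega

theorem card_pairs_le (hout : IsPerfectLayer s a b) (hin : ∀ i, b i + b (i + t) + a i = 1)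
    (ht : t + t = 0) :
    #{x | (a + b) x = 1 ∧ (a + b) (x + s) = 1} ≤
      #{x | (a + b) x = 0 ∧ (a + b) (x + s) = 0} := by
  have vacant : ∀ y, b y = 1 → (a + b) (y + t) = 0 := fun y hy => by
    have := hin (y + t)
    rw [add_assoc y, ht, add_zero] at this
    simp only [Pi.add_apply]
    omega
  refine card_le_card_of_injOn (· + t) (fun y hy => ?_) (add_left_injective t).injOn
  simp only [coe_filter, mem_univ, true_and, Set.mem_ofPred_eq] at hy ⊢
  obtain ⟨hy₀, hy₁⟩ := hout.right_eq_one_of_pair hy.1 hy.2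
  exact ⟨vacant y hy₀, by rw [add_right_comm]; exact vacant _ hy₁⟩

/-- When `t + t = 0` the neighbours `i ± t` coincide. The counts then give `|b| = 2|a|` and
`|G| = 5|a|`, and the pair count forces `|a| = 0`. -/
theorem card_eq_zero (hout : IsPerfectLayer s a b) (hin : ∀ i, b i + b (i + t) + a i = 1)
    (ht : t + t = 0) : Fintype.card G = 0 := by
  have hout_card := hout.three_mul_sum_add_sum_eq_card
  have hin_card : 2 * ∑ i, b i + ∑ i, a i = Fintype.card G := by
    have := Fintype.sum_congr _ _ hin
    simp only [sum_add_distrib, Fintype.sum_comp_add_right, sum_const, card_univ,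
      smul_eq_mul, mul_one] at this
    omega
  have hpairs := card_pairs_eq_one_add_card (d := a + b) hout.add_le_one s
  have hle := hout.card_pairs_le hin ht
  have hsplit : ∑ x, (a + b) x = ∑ x, a x + ∑ x, b x := sum_add_distrib
  omega

end IsPerfectLayer

theorem ZMod.apply_add_natCast_eq_iff_even {n : ℕ} {d : ZMod n → ℕ}
    (hd : ∀ x, d x + d (x + 1) = 1) (x : ZMod n) (m : ℕ) : d (x + m) = d x ↔ Even m := by
  induction m with
  | zero => simp
  | succ m ih =>
    rw [Nat.cast_succ, ← add_assoc, Nat.even_add_one, ← ih]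
    have := hd (x + m)
    have := hd x
    omega

end Domination

section Shifts

variable {H V M : Type*} [AddGroup H] [DecidableEq V] [AddCommMonoid M]

theorem eq_or_eq_add_or_eq_sub_iff {i j s : H} :
    (j = i ∨ j = i + s ∨ j = i - s) ↔
      (j = i ∨ (i ≠ j ∧ (j = i + s ∨ i = j + s))) := by
  rw [eq_sub_iff_add_eq, eq_comm (a := j + s)]
  by_cases h : j = i
  · simp [h]
  · simp [h, Ne.symm h]

variable {e : H → V} {w : V} {s : H}

theorem sum_insert_shifts (he : Function.Injective e) (hw : ∀ j, e j ≠ w) (hs : s + s ≠ 0)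
    (f : V → M) (i : H) :
    ∑ y ∈ {e i, e (i + s), e (i - s), w}, f y =
      f (e i) + f (e (i + s)) + f (e (i - s)) + f w := by
  have hs₀ : s ≠ 0 := by rintro rfl; exact hs (add_zero 0)
  have hp : i ≠ i + s := fun h => hs₀ (add_eq_left.mp h.symm)
  have hm : i ≠ i - s := fun h => hs₀ (sub_eq_self.mp h.symm)
  have hpm : i + s ≠ i - s := fun h =>
    hs (eq_neg_iff_add_eq_zero.mp (add_left_cancel (h.trans (sub_eq_add_neg i s))))
  rw [sum_insert, sum_insert, sum_insert, sum_singleton, add_assoc, add_assoc]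
  all_goals simp [he.eq_iff, hw, hp, hm, hpm]

theorem sum_insert_shifts_of_add_self_eq_zero (he : Function.Injective e) (hw : ∀ j, e j ≠ w)
    (hs₀ : s ≠ 0) (hs : s + s = 0) (f : V → M) (i : H) :
    ∑ y ∈ {e i, e (i + s), e (i - s), w}, f y = f (e i) + f (e (i + s)) + f w := by
  rw [sub_eq_add_neg, neg_eq_of_add_eq_zero_right hs, insert_idem, sum_insert, sum_insert,
    sum_singleton, add_assoc]
  all_goals simp [he.eq_iff, hw, hs₀]

end Shifts

namespace GP

variable {n k : ℕ}

def closedNbhd (n k : ℕ) : ZMod n ⊕ ZMod n → Finset (ZMod n ⊕ ZMod n)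
  | .inl i => {.inl i, .inl (i + 1), .inl (i - 1), .inr i}
  | .inr i => {.inr i, .inr (i + k), .inr (i - k), .inl i}

theorem mem_closedNbhd {x y : ZMod n ⊕ ZMod n} :
    y ∈ closedNbhd n k x ↔ y = x ∨ (GP n k).Adj x y := by
  rcases x with i | i <;> rcases y with j | j
  · simpa [closedNbhd, GP] using eq_or_eq_add_or_eq_sub_iff
  · simp [closedNbhd, GP, eq_comm]
  · simp [closedNbhd, GP, eq_comm]
  · simpa [closedNbhd, GP] using eq_or_eq_add_or_eq_sub_iff

theorem sum_closedNbhd_inl (h2 : (2 : ZMod n) ≠ 0) (f : ZMod n ⊕ ZMod n → ℕ) (i : ZMod n) :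
    ∑ y ∈ closedNbhd n k (.inl i), f y =
      f (.inl i) + f (.inl (i + 1)) + f (.inl (i - 1)) + f (.inr i) :=
  sum_insert_shifts Sum.inl_injective (fun _ => Sum.inl_ne_inr) (by rwa [one_add_one_eq_two]) f i

theorem sum_closedNbhd_inr (h2k : 2 * (k : ZMod n) ≠ 0) (f : ZMod n ⊕ ZMod n → ℕ)
    (i : ZMod n) :
    ∑ y ∈ closedNbhd n k (.inr i), f y =
      f (.inr i) + f (.inr (i + k)) + f (.inr (i - k)) + f (.inl i) :=
  sum_insert_shifts Sum.inr_injective (fun _ => Sum.inr_ne_inl) (by rwa [← two_mul]) f i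

theorem sum_closedNbhd_inr_of_two_mul_eq_zero (hk : (k : ZMod n) ≠ 0)
    (h2k : 2 * (k : ZMod n) = 0) (f : ZMod n ⊕ ZMod n → ℕ) (i : ZMod n) :
    ∑ y ∈ closedNbhd n k (.inr i), f y = f (.inr i) + f (.inr (i + k)) + f (.inl i) :=
  sum_insert_shifts_of_add_self_eq_zero Sum.inr_injective (fun _ => Sum.inr_ne_inl) hk
    (by rwa [← two_mul]) f i

theorem mod_four_eq_zero_and_mod_two_eq_one (hn : 3 ≤ n) (hk : (k : ZMod n) ≠ 0)
    {C : Set (ZMod n ⊕ ZMod n)} (hC : IsPerfectCode (GP n k) C) : n % 4 = 0 ∧ k % 2 = 1 := by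
  have : NeZero n := ⟨by omega⟩
  have h2 : (2 : ZMod n) ≠ 0 := by
    rw [← Nat.cast_ofNat, ne_eq, ZMod.natCast_eq_zero_iff]
    exact fun h => absurd (Nat.le_of_dvd two_pos h) (by omega)
  have hN := (isPerfectCode_iff_sum_indicator _ fun _ _ => mem_closedNbhd).1 hC
  set a : ZMod n → ℕ := C.indicator 1 ∘ Sum.inl
  set b : ZMod n → ℕ := C.indicator 1 ∘ Sum.inr
  have hout : IsPerfectLayer 1 a b := fun i =>
    (sum_closedNbhd_inl h2 _ i).symm.trans (hN (.inl i))
  by_cases h2k : 2 * (k : ZMod n) = 0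
  · have hin : ∀ i, b i + b (i + k) + a i = 1 := fun i =>
      (sum_closedNbhd_inr_of_two_mul_eq_zero hk h2k _ i).symm.trans (hN (.inr i))
    have := hout.card_eq_zero hin (by rwa [← two_mul])
    rw [ZMod.card] at this
    omega
  have hin : IsPerfectLayer (k : ZMod n) b a := fun i =>
    (sum_closedNbhd_inr h2k _ i).symm.trans (hN (.inr i))
  have hcard := hout.card_eq_four_mul_sum hin
  rw [ZMod.card] at hcard
  refine ⟨by omega, ?_⟩
  obtain ⟨y, -, hy⟩ := exists_ne_zero_of_sum_ne_zero (s := univ) (f := b)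
    (by rw [hout.sum_right_eq_sum_left hin]; omega)
  have hy₁ : b y = 1 := by
    have := hout.add_le_one y
    omega
  have hyk := (hin.add_eq_zero_of_eq_one hy₁).1
  have hy₀ := hout.add_le_one y
  rw [← Nat.odd_iff, ← Nat.not_even_iff_odd,
    ← ZMod.apply_add_natCast_eq_iff_even (hout.apply_add_apply_add_eq_one hin) y k]
  simp only [Pi.add_apply]
  omega

theorem isPerfectCode_of_four_dvd (h4 : 4 ∣ n) (hk : k % 2 = 1) :
    IsPerfectCode (GP n k) {y | Sum.elim (fun i => ZMod.castHom h4 (ZMod 4) i = 0)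
      (fun i => ZMod.castHom h4 (ZMod 4) i = 2) y} := by
  set c := ZMod.castHom h4 (ZMod 4)
  have hκ : (k : ZMod 4) = 1 ∨ (k : ZMod 4) = 3 := by
    rw [← ZMod.natCast_mod]
    rcases (by omega : k % 4 = 1 ∨ k % 4 = 3) with h | h <;> simp [h]
  have h2 : (2 : ZMod n) ≠ 0 := fun h => by
    have := congrArg c h
    rw [map_ofNat, map_zero] at this
    exact absurd this (by decide)
  have h2k : 2 * (k : ZMod n) ≠ 0 := fun h => by
    have := congrArg c h
    rw [map_mul, map_ofNat, map_natCast, map_zero] at this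
    rcases hκ with hκ | hκ <;> rw [hκ] at this <;> exact absurd this (by decide)
  set C := {y | Sum.elim (fun i => c i = 0) (fun i => c i = 2) y}
  have hind : ∀ y (p : Prop) [Decidable p], (y ∈ C ↔ p) →
      C.indicator (1 : ZMod n ⊕ ZMod n → ℕ) y = if p then 1 else 0 := fun y p _ hy => by
    by_cases h : p
    · rw [if_pos h, Set.indicator_of_mem (hy.2 h), Pi.one_apply]
    · rw [if_neg h, Set.indicator_of_notMem (mt hy.1 h)]
  have hl := fun i => hind (.inl i) (c i = 0) Iff.rfl
  have hr := fun i => hind (.inr i) (c i = 2) Iff.rfl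
  rw [isPerfectCode_iff_sum_indicator _ fun _ _ => mem_closedNbhd, Sum.forall]
  refine ⟨fun i => ?_, fun i => ?_⟩
  · rw [sum_closedNbhd_inl h2, hl, hl, hl, hr, map_add, map_sub, map_one]
    generalize c i = x
    revert x
    decide
  · rw [sum_closedNbhd_inr h2k, hl, hr, hr, hr, map_add, map_sub, map_natCast]
    generalize c i = x
    rcases hκ with hκ | hκ <;> rw [hκ] <;> revert x <;> decide

end GP

/-- GP(n,k) admits a perfect code iff n ≡ 0 (mod 4) and k ≡ 1 (mod 2). -/
theorem stmt_16 (n k : ℕ) (hn : 3 ≤ n) (hk0 : (k : ZMod n) ≠ 0) :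
    (∃ C : Set (ZMod n ⊕ ZMod n), IsPerfectCode (GP n k) C) ↔
      n % 4 = 0 ∧ k % 2 = 1 := by
  constructor
  · rintro ⟨C, hC⟩
    exact GP.mod_four_eq_zero_and_mod_two_eq_one hn hk0 hC
  · rintro ⟨h4, hk⟩
    exact ⟨_, GP.isPerfectCode_of_four_dvd (Nat.dvd_of_mod_eq_zero h4) hk⟩
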